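/- Let d ≥ 2 be an integer and α ∈ (0,2). Let Π = {y ∈ ℝ^d : y₁ ≤ 1}, let B₁ be the open unit ball centered at the origin, and set P = Π \ B₁. Then there exists a constant C > 0 such that for every x = (r,0,…,0) with r ∈ (1/2, 2) and r ≠ 1: ∫_P |x−y|^{−(d+α)} dy ≤ C if 0 < α < 1; ∫_P |x−y|^{−(d+α)} dy ≤ C(1 + |log|1−r||) if α = 1; and ∫_P |x−y|^{−(d+α)} dy ≤ C|1−r|^{1−α} if 1 < α < 2. -/

import Mathlib

/-!
Layer cake: with `q = d + α`, `∫_P |x - y|^{-q} dy ≤ ∫_0^∞ |P ∩ B(x, t^{-1/q})| dt`.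
Since `P` misses `B(x, |1 - r|)`, only `t < |1 - r|^{-q}` contributes. For `t ≤ 1` the crude
bound `|B_ρ| ≤ (2ρ)^d` suffices because `d < q`. For `t > 1`, i.e. `ρ < 1`, the set `P ∩ B_ρ`
hugs the tangent plane `y₁ = 1` of the unit sphere: it lies in a box of height `ρ²` and width `2ρ`,
so `|P ∩ B_ρ| ≤ 2^d ρ^{d+1}`. What remains is `∫_1^{|1-r|^{-q}} t^{-(d+1)/q} dt`, which is bounded,
logarithmic or of order `|1 - r|^{1-α}` according as `α < 1`, `α = 1` or `α > 1`.
-/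

open MeasureTheory Real Set Metric

lemma lintegral_Ioc_ofReal_eq_intervalIntegral {f : ℝ → ℝ} {a b : ℝ} (hab : a ≤ b)
    (hf : IntervalIntegrable f volume a b) (hf_nonneg : ∀ t ∈ Ioc a b, 0 ≤ f t) :
    ∫⁻ t in Ioc a b, ENNReal.ofReal (f t) = ENNReal.ofReal (∫ t in a..b, f t) := by
  rw [intervalIntegral.integral_of_le hab, ofReal_integral_eq_lintegral_ofReal hf.1
    (ae_restrict_of_forall_mem measurableSet_Ioc hf_nonneg)]

lemma integral_zero_one_rpow {s : ℝ} (hs : -1 < s) : ∫ t in (0:ℝ)..1, t ^ s = 1 / (s + 1) := by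
  rw [integral_rpow (Or.inl hs), one_rpow, zero_rpow (by linarith)]
  ring

section OneDimensional
variable {n α δ : ℝ}

lemma integral_one_rpow_neg_div_eq (hq : n + α ≠ 0) (hα : α ≠ 1) (hδ : 0 < δ) :
    ∫ t in (1:ℝ)..δ ^ (-(n + α)), t ^ (-(n + 1) / (n + α))
      = (n + α) * (δ ^ (1 - α) - 1) / (α - 1) := by
  have h0 : (0:ℝ) ∉ uIcc 1 (δ ^ (-(n + α))) := notMem_uIcc_of_lt one_pos (rpow_pos_of_pos hδ _)
  have hexp : -(n + 1) / (n + α) + 1 = (α - 1) / (n + α) := by field_simp; ring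
  have hne : -(n + 1) / (n + α) ≠ -1 := by
    intro h
    rw [h, neg_add_cancel, eq_comm, div_eq_zero_iff] at hexp
    exact hexp.elim (fun h => hα (by linarith)) hq
  rw [integral_rpow (Or.inr ⟨hne, h0⟩), hexp, one_rpow, ← rpow_mul hδ.le,
    show -(n + α) * ((α - 1) / (n + α)) = 1 - α by field_simp; ring]
  field_simp

lemma integral_one_rpow_neg_div_le_of_lt_one (hq : 0 < n + α) (hα : α < 1) (hδ : 0 < δ) :
    ∫ t in (1:ℝ)..δ ^ (-(n + α)), t ^ (-(n + 1) / (n + α)) ≤ (n + α) / (1 - α) := by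
  rw [integral_one_rpow_neg_div_eq hq.ne' hα.ne hδ, div_le_iff_of_neg (by linarith)]
  have hlhs : (n + α) / (1 - α) * (α - 1) = -(n + α) := by
    field_simp [show 1 - α ≠ 0 by linarith]
    ring
  nlinarith [rpow_nonneg hδ.le (1 - α)]

lemma integral_one_rpow_neg_div_le_of_one_lt (hq : 0 < n + α) (hα : 1 < α) (hδ : 0 < δ) :
    ∫ t in (1:ℝ)..δ ^ (-(n + α)), t ^ (-(n + 1) / (n + α)) ≤ (n + α) / (α - 1) * δ ^ (1 - α) := by
  rw [integral_one_rpow_neg_div_eq hq.ne' hα.ne' hδ, div_mul_eq_mul_div]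
  gcongr
  linarith

lemma integral_one_rpow_neg_one (hq : 0 < n + 1) (hδ : 0 < δ) (hδ1 : δ ≤ 1) :
    ∫ t in (1:ℝ)..δ ^ (-(n + 1)), t ^ (-(n + 1) / (n + 1)) = (n + 1) * |log δ| := by
  have h0 : (0:ℝ) ∉ uIcc 1 (δ ^ (-(n + 1))) := notMem_uIcc_of_lt one_pos (rpow_pos_of_pos hδ _)
  rw [neg_div, div_self hq.ne']
  simp only [rpow_neg_one]
  rw [integral_inv h0, div_one, log_rpow hδ, abs_of_nonpos (log_nonpos hδ.le hδ1)]
  ring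

end OneDimensional

section LayerCake
variable {E : Type*} [NormedAddCommGroup E] [MeasurableSpace E]
  (μ : Measure E) (S : Set E) (x : E) {q : ℝ}

lemma lintegral_rpow_neg_norm_sub_le_lintegral_measure_inter_ball [BorelSpace E] (hq : 0 < q) :
    ∫⁻ y in S, ENNReal.ofReal (‖x - y‖ ^ (-q)) ∂μ
      ≤ ∫⁻ t in Ioi 0, μ (S ∩ ball x (t ^ (-q)⁻¹)) := by
  have hf : Measurable fun y => ‖x - y‖ ^ (-q) := by fun_prop
  rw [lintegral_eq_lintegral_meas_lt _ (ae_of_all _ fun y => rpow_nonneg (norm_nonneg _) _)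
    hf.aemeasurable]
  refine setLIntegral_mono' measurableSet_Ioi fun t ht => ?_
  rw [Measure.restrict_apply (measurableSet_lt measurable_const hf), inter_comm]
  refine measure_mono (inter_subset_inter_right _ fun y hy => ?_)
  have hy : t < ‖x - y‖ ^ (-q) := hy
  have hxy : 0 < ‖x - y‖ := by
    refine (norm_nonneg _).lt_of_ne fun h => ?_
    rw [← h, zero_rpow (neg_ne_zero.mpr hq.ne')] at hy
    exact (lt_irrefl _ (ht.trans hy))
  rw [mem_ball', dist_eq_norm, lt_rpow_inv_iff_of_neg hxy ht (neg_neg_of_pos hq)]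
  exact hy

variable {μ S x} {a b δ A B : ℝ}

lemma setLIntegral_Ioc_zero_one_measure_inter_ball_le (hq : 0 < q) (haq : a < q) (hA : 0 ≤ A)
    (h_far : ∀ ρ, 1 ≤ ρ → μ (S ∩ ball x ρ) ≤ ENNReal.ofReal (A * ρ ^ a)) :
    ∫⁻ t in Ioc 0 1, μ (S ∩ ball x (t ^ (-q)⁻¹)) ≤ ENNReal.ofReal (A * (q / (q - a))) := by
  have hexp : -1 < -a / q := by rw [neg_div, neg_lt_neg_iff, div_lt_one hq]; exact haq
  calc ∫⁻ t in Ioc 0 1, μ (S ∩ ball x (t ^ (-q)⁻¹))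
      ≤ ∫⁻ t in Ioc 0 1, ENNReal.ofReal (A * t ^ (-a / q)) := by
        refine setLIntegral_mono' measurableSet_Ioc fun t ht => ?_
        refine (h_far _ (one_le_rpow_of_pos_of_le_one_of_nonpos ht.1 ht.2
          (inv_nonpos.mpr (by linarith)))).trans_eq ?_
        rw [← rpow_mul ht.1.le]
        congr 3
        field_simp
    _ = ENNReal.ofReal (A * (q / (q - a))) := by
        rw [lintegral_Ioc_ofReal_eq_intervalIntegral zero_le_one
          ((intervalIntegral.intervalIntegrable_rpow' hexp).const_mul A)
          (fun t ht => mul_nonneg hA (rpow_nonneg ht.1.le _)), intervalIntegral.integral_const_mul,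
          integral_zero_one_rpow hexp]
        rw [show -a / q + 1 = (q - a) / q by field_simp; ring, one_div_div]

lemma setLIntegral_Ioc_one_measure_inter_ball_le (hq : 0 < q) (hB : 0 ≤ B) (hδ : 0 < δ)
    (hδ1 : δ ≤ 1) (h_near : ∀ ρ, 0 < ρ → ρ < 1 → μ (S ∩ ball x ρ) ≤ ENNReal.ofReal (B * ρ ^ b)) :
    ∫⁻ t in Ioc 1 (δ ^ (-q)), μ (S ∩ ball x (t ^ (-q)⁻¹))
      ≤ ENNReal.ofReal (B * ∫ t in (1:ℝ)..δ ^ (-q), t ^ (-b / q)) := by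
  have hT : 1 ≤ δ ^ (-q) := one_le_rpow_of_pos_of_le_one_of_nonpos hδ hδ1 (by linarith)
  calc ∫⁻ t in Ioc 1 (δ ^ (-q)), μ (S ∩ ball x (t ^ (-q)⁻¹))
      ≤ ∫⁻ t in Ioc 1 (δ ^ (-q)), ENNReal.ofReal (B * t ^ (-b / q)) := by
        refine setLIntegral_mono' measurableSet_Ioc fun t ht => ?_
        have ht0 : 0 < t := one_pos.trans ht.1
        refine (h_near _ (rpow_pos_of_pos ht0 _) (rpow_lt_one_of_one_lt_of_neg ht.1
          (inv_lt_zero.mpr (by linarith)))).trans_eq ?_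
        rw [← rpow_mul ht0.le]
        congr 3
        field_simp
    _ = ENNReal.ofReal (B * ∫ t in (1:ℝ)..δ ^ (-q), t ^ (-b / q)) := by
        rw [lintegral_Ioc_ofReal_eq_intervalIntegral hT
          ((intervalIntegral.intervalIntegrable_rpow
            (Or.inr (notMem_uIcc_of_lt one_pos (one_pos.trans_le hT)))).const_mul B)
          (fun t ht => mul_nonneg hB (rpow_nonneg (one_pos.trans ht.1).le _)),
          intervalIntegral.integral_const_mul]

lemma setLIntegral_Ioi_measure_inter_ball_eq_zero (hq : 0 < q) (hδ : 0 < δ)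
    (h_disj : Disjoint S (ball x δ)) :
    ∫⁻ t in Ioi (δ ^ (-q)), μ (S ∩ ball x (t ^ (-q)⁻¹)) = 0 := by
  refine setLIntegral_eq_zero measurableSet_Ioi fun t ht => ?_
  have ht0 : 0 < t := (rpow_pos_of_pos hδ _).trans ht
  have hρ : t ^ (-q)⁻¹ < δ := (rpow_inv_lt_iff_of_neg ht0 hδ (by linarith)).mpr ht
  rw [(h_disj.mono_right (ball_subset_ball hρ.le)).inter_eq, measure_empty, Pi.zero_apply]

theorem lintegral_rpow_neg_norm_sub_le [BorelSpace E] (hq : 0 < q) (haq : a < q) (hA : 0 ≤ A)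
    (hB : 0 ≤ B) (hδ : 0 < δ) (hδ1 : δ ≤ 1)
    (h_far : ∀ ρ, 1 ≤ ρ → μ (S ∩ ball x ρ) ≤ ENNReal.ofReal (A * ρ ^ a))
    (h_near : ∀ ρ, 0 < ρ → ρ < 1 → μ (S ∩ ball x ρ) ≤ ENNReal.ofReal (B * ρ ^ b))
    (h_disj : Disjoint S (ball x δ)) :
    ∫⁻ y in S, ENNReal.ofReal (‖x - y‖ ^ (-q)) ∂μ
      ≤ ENNReal.ofReal (A * (q / (q - a)) + B * ∫ t in (1:ℝ)..δ ^ (-q), t ^ (-b / q)) := by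
  have hT : 1 ≤ δ ^ (-q) := one_le_rpow_of_pos_of_le_one_of_nonpos hδ hδ1 (by linarith)
  have hJ : 0 ≤ ∫ t in (1:ℝ)..δ ^ (-q), t ^ (-b / q) :=
    intervalIntegral.integral_nonneg hT fun t ht => rpow_nonneg (zero_le_one.trans ht.1) _
  rw [ENNReal.ofReal_add (mul_nonneg hA (div_nonneg hq.le (sub_pos.mpr haq).le))
    (mul_nonneg hB hJ)]
  refine (lintegral_rpow_neg_norm_sub_le_lintegral_measure_inter_ball μ S x hq).trans ?_
  rw [← Ioc_union_Ioi_eq_Ioi zero_le_one, lintegral_union measurableSet_Ioi Ioc_disjoint_Ioi_same,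
    ← Ioc_union_Ioi_eq_Ioi hT, lintegral_union measurableSet_Ioi Ioc_disjoint_Ioi_same,
    setLIntegral_Ioi_measure_inter_ball_eq_zero hq hδ h_disj, add_zero]
  exact add_le_add (setLIntegral_Ioc_zero_one_measure_inter_ball_le hq haq hA h_far)
    (setLIntegral_Ioc_one_measure_inter_ball_le hq hB hδ hδ1 h_near)

end LayerCake

def halfspaceDiffUnitBall (d : ℕ) (i : Fin d) : Set (EuclideanSpace ℝ (Fin d)) :=
  {y | y i ≤ 1} \ ball 0 1

section HalfspaceDiffUnitBall
variable {d : ℕ}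

lemma volume_setOf_forall_mem_Icc (a b : Fin d → ℝ) :
    volume {y : EuclideanSpace ℝ (Fin d) | ∀ j, y j ∈ Icc (a j) (b j)}
      = ∏ j, ENNReal.ofReal (b j - a j) := by
  rw [← Real.volume_Icc_pi, ← (PiLp.volume_preserving_ofLp (Fin d)).measure_preimage
    measurableSet_Icc.nullMeasurableSet]
  congr 1
  ext y
  simp [Pi.le_def, forall_and]

lemma volume_euclideanSpace_ball_le (x : EuclideanSpace ℝ (Fin d)) {ρ : ℝ} (hρ : 0 ≤ ρ) :
    volume (ball x ρ) ≤ ENNReal.ofReal (2 ^ d * ρ ^ d) := by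
  calc volume (ball x ρ)
      ≤ volume {y : EuclideanSpace ℝ (Fin d) | ∀ j, y j ∈ Icc (x j - ρ) (x j + ρ)} := by
        refine measure_mono fun y hy j => ?_
        have h := (PiLp.dist_apply_le y x j).trans (mem_ball.mp hy).le
        rw [Real.dist_eq, abs_le] at h
        constructor <;> linarith [h.1, h.2]
    _ = ENNReal.ofReal (2 ^ d * ρ ^ d) := by
        rw [volume_setOf_forall_mem_Icc, ← mul_pow, ENNReal.ofReal_pow (by positivity)]
        simp only [add_sub_sub_cancel, ← two_mul, Finset.prod_const, Finset.card_univ,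
          Fintype.card_fin]

variable (i : Fin d) {r : ℝ}

lemma abs_one_sub_le_norm_sub_of_mem (hr : 0 ≤ r) {y : EuclideanSpace ℝ (Fin d)}
    (hy : y ∈ halfspaceDiffUnitBall d i) :
    |1 - r| ≤ ‖r • EuclideanSpace.single i (1:ℝ) - y‖ := by
  set x := r • EuclideanSpace.single i (1:ℝ)
  obtain ⟨hyi, hy1⟩ := hy
  have hyi : y i ≤ 1 := hyi
  have hy1 : 1 ≤ ‖y‖ := by simpa using hy1
  have hx : ‖x‖ = r := by simp [x, norm_smul, PiLp.norm_single, abs_of_nonneg hr]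
  rw [abs_sub_le_iff]
  constructor
  · calc 1 - r ≤ ‖y‖ - ‖x‖ := by linarith
      _ ≤ ‖x - y‖ := (norm_sub_norm_le _ _).trans_eq (norm_sub_rev _ _)
  · calc r - 1 ≤ r - y i := by linarith
      _ = (x - y) i := by simp [x]
      _ ≤ ‖x - y‖ := (Real.le_norm_self _).trans (PiLp.norm_apply_le _ i)

lemma halfspaceDiffUnitBall_inter_ball_subset (hr : 1 / 2 ≤ r) (ρ : ℝ) :
    halfspaceDiffUnitBall d i ∩ ball (r • EuclideanSpace.single i (1:ℝ)) ρ ⊆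
      {y | ∀ j, y j ∈ Icc (if j = i then 1 - ρ ^ 2 else -ρ) (if j = i then 1 else ρ)} := by
  set x := r • EuclideanSpace.single i (1:ℝ)
  rintro y ⟨⟨hyi, hy1⟩, hyx⟩ j
  have hyi : y i ≤ 1 := hyi
  have hy1 : 1 ≤ ‖y‖ := by simpa using hy1
  split_ifs with hj
  · subst hj
    have hsq : ‖y - x‖ ^ 2 = ‖y‖ ^ 2 - 2 * r * y j + r ^ 2 := by
      rw [norm_sub_sq_real]
      simp [x, norm_smul, PiLp.norm_single, inner_smul_right, EuclideanSpace.inner_single_right]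
      ring
    have hyx2 : ‖y - x‖ ^ 2 < ρ ^ 2 :=
      pow_lt_pow_left₀ (by rwa [mem_ball, dist_eq_norm] at hyx) (norm_nonneg _) two_ne_zero
    have hy2 : 1 ≤ ‖y‖ ^ 2 := one_le_pow₀ hy1
    refine ⟨?_, hyi⟩
    -- `ρ² > ‖y‖² - 2 r yᵢ + r² ≥ (1 - r)² + 2 r (1 - yᵢ)` and `2 r ≥ 1`
    nlinarith [mul_nonneg (sub_nonneg.mpr hyi) (by linarith : (0:ℝ) ≤ 2 * r - 1), sq_nonneg (1 - r)]
  · have h := (PiLp.dist_apply_le y x j).trans_lt (mem_ball.mp hyx)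
    have hxj : x j = 0 := by simp [x, hj]
    rw [hxj, Real.dist_0_eq_abs, abs_lt] at h
    exact ⟨h.1.le, h.2.le⟩

lemma volume_halfspaceDiffUnitBall_inter_ball_le (hr : 1 / 2 ≤ r) {ρ : ℝ} (hρ : 0 ≤ ρ) :
    volume (halfspaceDiffUnitBall d i ∩ ball (r • EuclideanSpace.single i (1:ℝ)) ρ)
      ≤ ENNReal.ofReal (2 ^ d * ρ ^ (d + 1)) := by
  obtain ⟨k, rfl⟩ : ∃ k, d = k + 1 := ⟨d - 1, by have := i.pos; omega⟩
  calc volume (halfspaceDiffUnitBall (k + 1) i ∩ ball (r • EuclideanSpace.single i (1:ℝ)) ρ)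
      ≤ _ := measure_mono (halfspaceDiffUnitBall_inter_ball_subset i hr ρ)
    _ = ENNReal.ofReal (ρ ^ 2) * ENNReal.ofReal (2 * ρ) ^ k := by
        simp only [volume_setOf_forall_mem_Icc, apply_ite₂ (· - ·), apply_ite ENNReal.ofReal,
          sub_sub_cancel, sub_neg_eq_add, ← two_mul]
        simp only [ENNReal.ofReal_mul zero_le_two, ENNReal.ofReal_ofNat, Finset.prod_ite,
          Finset.filter_eq', Finset.mem_univ, ↓reduceIte, Finset.prod_const, Finset.card_singleton,
          pow_one, Finset.filter_ne', Finset.card_erase_of_mem, Finset.card_univ, Fintype.card_fin,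
          add_tsub_cancel_right]
    _ ≤ ENNReal.ofReal (2 ^ (k + 1) * ρ ^ (k + 1 + 1)) := by
        rw [← ENNReal.ofReal_pow (by positivity), ← ENNReal.ofReal_mul (by positivity),
          show ρ ^ 2 * (2 * ρ) ^ k = 2 ^ k * ρ ^ (k + 1 + 1) by ring]
        gcongr
        · norm_num
        · omega


theorem lintegral_halfspaceDiffUnitBall_rpow_neg_le {α : ℝ} (hα : 0 < α) (hr : 1 / 2 ≤ r)
    (hr2 : r ≤ 2) (hr1 : r ≠ 1) :
    ∫⁻ y in halfspaceDiffUnitBall d i,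
        ENNReal.ofReal (‖r • EuclideanSpace.single i (1:ℝ) - y‖ ^ (-((d:ℝ) + α)))
      ≤ ENNReal.ofReal (2 ^ d * (((d:ℝ) + α) / α) + 2 ^ d *
          ∫ t in (1:ℝ)..|1 - r| ^ (-((d:ℝ) + α)), t ^ (-((d:ℝ) + 1) / ((d:ℝ) + α))) := by
  have h_disj : Disjoint (halfspaceDiffUnitBall d i)
      (ball (r • EuclideanSpace.single i (1:ℝ)) |1 - r|) :=
    disjoint_left.mpr fun y hy hyb => (abs_one_sub_le_norm_sub_of_mem i (by linarith) hy).not_gt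
      (by rwa [mem_ball', dist_eq_norm] at hyb)
  have h := lintegral_rpow_neg_norm_sub_le (q := d + α) (a := d) (b := d + 1)
    (A := 2 ^ d) (B := 2 ^ d)
    (by positivity) (by linarith) (by positivity) (by positivity)
    (abs_pos.mpr (sub_ne_zero.mpr hr1.symm)) (abs_le.mpr ⟨by linarith, by linarith⟩)
    (fun ρ hρ => (measure_mono inter_subset_right).trans
      ((volume_euclideanSpace_ball_le _ (by linarith)).trans_eq (by rw [rpow_natCast])))
    (fun ρ hρ _ => (volume_halfspaceDiffUnitBall_inter_ball_le i hr hρ.le).trans_eq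
      (by rw [← Nat.cast_add_one, rpow_natCast]))
    h_disj
  rwa [add_sub_cancel_left] at h

lemma lintegral_halfspaceDiffUnitBall_rpow_neg_le_of_lt_one {α : ℝ}
    (hα : 0 < α) (hα1 : α < 1) (hr : 1 / 2 ≤ r) (hr2 : r ≤ 2) (hr1 : r ≠ 1) :
    ∫⁻ y in halfspaceDiffUnitBall d i,
        ENNReal.ofReal (‖r • EuclideanSpace.single i (1:ℝ) - y‖ ^ (-((d:ℝ) + α)))
      ≤ ENNReal.ofReal (2 ^ d * ((d:ℝ) + α) * (α⁻¹ + (1 - α)⁻¹)) := by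
  refine (lintegral_halfspaceDiffUnitBall_rpow_neg_le i hα hr hr2 hr1).trans
    (ENNReal.ofReal_le_ofReal ?_)
  calc 2 ^ d * (((d:ℝ) + α) / α) + 2 ^ d * _
      ≤ 2 ^ d * (((d:ℝ) + α) / α) + 2 ^ d * (((d:ℝ) + α) / (1 - α)) := by
        gcongr
        exact integral_one_rpow_neg_div_le_of_lt_one (by positivity) hα1
          (abs_pos.mpr (sub_ne_zero.mpr hr1.symm))
    _ = _ := by ring

lemma lintegral_halfspaceDiffUnitBall_rpow_neg_one_le (hr : 1 / 2 ≤ r) (hr2 : r ≤ 2)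
    (hr1 : r ≠ 1) :
    ∫⁻ y in halfspaceDiffUnitBall d i,
        ENNReal.ofReal (‖r • EuclideanSpace.single i (1:ℝ) - y‖ ^ (-((d:ℝ) + 1)))
      ≤ ENNReal.ofReal (2 ^ d * ((d:ℝ) + 1) * (1 + |log (|1 - r|)|)) := by
  refine (lintegral_halfspaceDiffUnitBall_rpow_neg_le i one_pos hr hr2 hr1).trans_eq ?_
  rw [integral_one_rpow_neg_one (by positivity) (abs_pos.mpr (sub_ne_zero.mpr hr1.symm))
    (abs_le.mpr ⟨by linarith, by linarith⟩)]
  ring_nf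

lemma lintegral_halfspaceDiffUnitBall_rpow_neg_le_of_one_lt {α : ℝ}
    (hα1 : 1 < α) (hr : 1 / 2 ≤ r) (hr2 : r ≤ 2) (hr1 : r ≠ 1) :
    ∫⁻ y in halfspaceDiffUnitBall d i,
        ENNReal.ofReal (‖r • EuclideanSpace.single i (1:ℝ) - y‖ ^ (-((d:ℝ) + α)))
      ≤ ENNReal.ofReal (2 ^ d * ((d:ℝ) + α) * (α⁻¹ + (α - 1)⁻¹) * |1 - r| ^ (1 - α)) := by
  have hδ : 0 < |1 - r| := abs_pos.mpr (sub_ne_zero.mpr hr1.symm)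
  have hδα : 1 ≤ |1 - r| ^ (1 - α) :=
    one_le_rpow_of_pos_of_le_one_of_nonpos hδ (abs_le.mpr ⟨by linarith, by linarith⟩) (by linarith)
  refine (lintegral_halfspaceDiffUnitBall_rpow_neg_le i (by linarith) hr hr2 hr1).trans
    (ENNReal.ofReal_le_ofReal ?_)
  calc 2 ^ d * (((d:ℝ) + α) / α) + 2 ^ d * _
      ≤ 2 ^ d * (((d:ℝ) + α) / α * |1 - r| ^ (1 - α))
          + 2 ^ d * (((d:ℝ) + α) / (α - 1) * |1 - r| ^ (1 - α)) := by
        gcongr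
        · exact le_mul_of_one_le_right (by positivity) hδα
        · exact integral_one_rpow_neg_div_le_of_one_lt (by positivity) hα1 hδ
    _ = _ := by ring
end HalfspaceDiffUnitBall

/-- Estimates on `∫_P |x-y|^{-(d+α)} dy` where `P = Π \ B₁`,
`Π = {y : y₁ ≤ 1}`, for `x = r e₁` near the unit sphere. -/
theorem halfspace_minus_ball_estimate (d : ℕ) (hd : 2 ≤ d) (α : ℝ) (hα : α ∈ Set.Ioo (0:ℝ) 2) :
    ∃ C : ℝ, 0 < C ∧
      ∀ r : ℝ, r ∈ Set.Ioo (1/2 : ℝ) 2 → r ≠ 1 →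
        ∀ x : EuclideanSpace ℝ (Fin d),
          x = r • EuclideanSpace.single (⟨0, by omega⟩ : Fin d) (1:ℝ) →
          ((α < 1 →
            (∫⁻ y in {y : EuclideanSpace ℝ (Fin d) | y (⟨0, by omega⟩ : Fin d) ≤ 1} \
                Metric.ball (0 : EuclideanSpace ℝ (Fin d)) 1,
              ENNReal.ofReal (‖x - y‖ ^ (-((d : ℝ) + α)))) ≤ ENNReal.ofReal C) ∧
          (α = 1 →
            (∫⁻ y in {y : EuclideanSpace ℝ (Fin d) | y (⟨0, by omega⟩ : Fin d) ≤ 1} \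
                Metric.ball (0 : EuclideanSpace ℝ (Fin d)) 1,
              ENNReal.ofReal (‖x - y‖ ^ (-((d : ℝ) + α)))) ≤
              ENNReal.ofReal (C * (1 + abs (Real.log (abs (1 - r)))))) ∧
          (1 < α →
            (∫⁻ y in {y : EuclideanSpace ℝ (Fin d) | y (⟨0, by omega⟩ : Fin d) ≤ 1} \
                Metric.ball (0 : EuclideanSpace ℝ (Fin d)) 1,
              ENNReal.ofReal (‖x - y‖ ^ (-((d : ℝ) + α)))) ≤
              ENNReal.ofReal (C * |1 - r| ^ (1 - α)))) := by
  obtain ⟨hα0, -⟩ := hα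
  refine ⟨2 ^ d * ((d : ℝ) + α) * (α⁻¹ + 1 + |1 - α|⁻¹), by positivity,
    fun r hr hr1 x hx => ?_⟩
  subst hx
  have hP : 0 < 2 ^ d * ((d : ℝ) + α) := by positivity
  refine ⟨fun hlt => ?_, fun heq => ?_, fun hgt => ?_⟩
  · refine (lintegral_halfspaceDiffUnitBall_rpow_neg_le_of_lt_one _ hα0 hlt hr.1.le hr.2.le
      hr1).trans (ENNReal.ofReal_le_ofReal ?_)
    rw [abs_of_pos (sub_pos.mpr hlt)]
    nlinarith
  · subst heq
    refine (lintegral_halfspaceDiffUnitBall_rpow_neg_one_le _ hr.1.le hr.2.le hr1).trans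
      (ENNReal.ofReal_le_ofReal ?_)
    rw [sub_self, abs_zero, inv_zero, inv_one]
    nlinarith [mul_nonneg hP.le (abs_nonneg (log |1 - r|))]
  · refine (lintegral_halfspaceDiffUnitBall_rpow_neg_le_of_one_lt _ hgt hr.1.le hr.2.le
      hr1).trans (ENNReal.ofReal_le_ofReal ?_)
    rw [abs_sub_comm 1 α, abs_of_pos (sub_pos.mpr hgt)]
    gcongr
    linarith
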